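/- arXiv:1901.00550 — 5 statements merged into one kernel-verified Lean document; each statement's English description precedes it below -/
import Mathlib

section
/- Let indices be taken modulo 4 (i.e., a_{i+4}=a_i, b_{i+4}=b_i, α_{i+4}=α_i). Suppose α_1,α_2,α_3,α_4 and a_1,a_2,a_3,a_4, b_1,b_2,b_3,b_4 are integers with 0 < a_i < α_{i+1} and 0 < b_i < α_{i+2} for all i, satisfying α_i = a_i + b_i for i = 1,...,4, and define n_1 = α_2·α_3·a_4 + a_2·b_3·b_4, n_2 = α_3·α_4·a_1 + a_3·b_4·b_1, n_3 = α_1·α_4·a_2 + a_4·b_1·b_2, n_4 = α_1·α_2·a_3 + a_1·b_2·b_3. Then n_1, n_2, n_3, n_4 are all odd if and only if one of the following holds: (a) all the α_i and all the a_i are odd; (b) there is exactly one index i_0 for which α_{i_0} is even, and moreover a_{i_0} and a_{i_0-1} are odd while the other two a_i are even; (c) all the α_i are even and all the a_i are odd. -/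
set_option maxHeartbeats 4000000 in
set_option synthInstance.maxHeartbeats 1000000 in
set_option synthInstance.maxSize 2000 in
private lemma zmod2_key (A B : ZMod 4 → ZMod 2) :
    (∀ i, A (i + 1) * A (i + 2) * B (i + 3) +
        B (i + 1) * (A (i + 2) - B (i + 2)) * (A (i + 3) - B (i + 3)) = 1) ↔
      ((∀ i, A i = 1) ∧ (∀ i, B i = 1)) ∨
      (∃ i0, A i0 = 0 ∧ (∀ j, j ≠ i0 → A j = 1) ∧
        B i0 = 1 ∧ B (i0 - 1) = 1 ∧ (∀ j, j ≠ i0 → j ≠ i0 - 1 → B j = 0)) ∨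
      ((∀ i, A i = 0) ∧ (∀ i, B i = 1)) := by
  revert B; revert A; decide

private lemma even_iff_cast (m : ℤ) : Even m ↔ (m : ZMod 2) = 0 := by
  rw [ZMod.intCast_zmod_eq_zero_iff_dvd]
  constructor
  · exact fun h => by exact_mod_cast h.two_dvd
  · rintro ⟨c, hc⟩; exact ⟨c, by push_cast at hc; omega⟩

private lemma odd_iff_cast (m : ℤ) : Odd m ↔ (m : ZMod 2) = 1 := by
  rw [← Int.not_even_iff_odd, even_iff_cast]
  generalize (m : ZMod 2) = x; revert x; decide

/-- Parity criterion for the generators of a 4-generated symmetric, non complete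
intersection numerical semigroup, stated with Bresinsky's relations as hypotheses.
Indices are taken modulo 4 (`ZMod 4`). -/
theorem odd_generators_iff_of_bresinsky
    (α a b n : ZMod 4 → ℤ)
    (ha : ∀ i, 0 < a i ∧ a i < α (i + 1))
    (hb : ∀ i, 0 < b i ∧ b i < α (i + 2))
    (hab : ∀ i, α i = a i + b i)
    (hn : ∀ i, n i = α (i + 1) * α (i + 2) * a (i + 3) + a (i + 1) * b (i + 2) * b (i + 3)) :
    (∀ i, Odd (n i)) ↔
      ((∀ i, Odd (α i)) ∧ (∀ i, Odd (a i))) ∨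
      (∃ i0, Even (α i0) ∧ (∀ j, j ≠ i0 → Odd (α j)) ∧
        Odd (a i0) ∧ Odd (a (i0 - 1)) ∧
        (∀ j, j ≠ i0 → j ≠ i0 - 1 → Even (a j))) ∨
      ((∀ i, Even (α i)) ∧ (∀ i, Odd (a i))) := by
  have hB : ∀ i, (b i : ZMod 2) = (α i : ZMod 2) - (a i : ZMod 2) := by
    intro i; rw [hab i]; push_cast; ring
  have key := zmod2_key (fun i => ((α i : ZMod 2))) (fun i => ((a i : ZMod 2)))
  simp only [odd_iff_cast, even_iff_cast]
  rw [← key]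
  refine forall_congr' fun i => ?_
  have hNi : (n i : ZMod 2) =
      (α (i + 1) : ZMod 2) * (α (i + 2) : ZMod 2) * (a (i + 3) : ZMod 2) +
        (a (i + 1) : ZMod 2) * ((α (i + 2) : ZMod 2) - (a (i + 2) : ZMod 2)) *
          ((α (i + 3) : ZMod 2) - (a (i + 3) : ZMod 2)) := by
    rw [hn i]; push_cast; rw [hB (i + 2), hB (i + 3)]
  rw [hNi]
end

section
/- Let S be a pseudo-symmetric numerical semigroup minimally generated by n_1, n_2, n_3, n_4, set f = F(S)/2, and let α_i = min{k ≥ 1 : k·n_i lies in the submonoid generated by the n_j with j ≠ i}. Suppose (as holds after a suitable relabeling of the generators) that for some nonnegative integer a one has f = −n_1 + (α_2−1)n_2, f = −n_2 + (α_3−1)n_3, f = (α_1−1)n_1 − n_3 + (α_4−1)n_4 and f = (α_1−1)n_1 + a·n_2 − n_4. Then n_1, n_2, n_3, n_4 are all odd if and only if one of the following holds: (1) f is odd and each of the four integers (α_2−1) − 1, (α_3−1) − 1, (α_1−1) + (α_4−1) − 1, (α_1−1) + a − 1 is odd; (2) f is even and each of these four integers is even. -/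
/-- A numerical semigroup: an additive submonoid of `ℕ` with finite complement. -/
structure NumericalSemigroup where
  carrier : Set ℕ
  zero_mem : 0 ∈ carrier
  add_mem : ∀ {a b : ℕ}, a ∈ carrier → b ∈ carrier → a + b ∈ carrier
  cofinite : Set.Finite carrierᶜ

namespace NumericalSemigroup

/-- The set of pseudo-Frobenius numbers of `S`. -/
def PF (S : NumericalSemigroup) : Set ℕ :=
  {f | f ∉ S.carrier ∧ ∀ s ∈ S.carrier, s ≠ 0 → f + s ∈ S.carrier}

/-- The Frobenius number of `S` (the maximum of the complement). -/
noncomputable def frob (S : NumericalSemigroup) : ℕ := sSup S.carrierᶜ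

/-- The genus of `S`: the number of gaps. -/
noncomputable def genus (S : NumericalSemigroup) : ℕ := S.carrierᶜ.ncard

/-- The type of `S`: the number of pseudo-Frobenius numbers. -/
noncomputable def typ (S : NumericalSemigroup) : ℕ := S.PF.ncard

/-- `S` is almost symmetric if `2 g(S) = F(S) + t(S)`. -/
def AlmostSymmetric (S : NumericalSemigroup) : Prop :=
  2 * S.genus = S.frob + S.typ

/-- `S` is pseudo-symmetric if `2 g(S) = F(S) + 2`. -/
def PseudoSymmetric (S : NumericalSemigroup) : Prop :=
  2 * S.genus = S.frob + 2

/-- `S` is minimally generated by the four (distinct) elements `n1, n2, n3, n4`. -/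
def MinGen4 (S : NumericalSemigroup) (n1 n2 n3 n4 : ℕ) : Prop :=
  [n1, n2, n3, n4].Pairwise (· ≠ ·) ∧
  S.carrier = (AddSubmonoid.closure ({n1, n2, n3, n4} : Set ℕ) : Set ℕ) ∧
  ∀ B ⊂ ({n1, n2, n3, n4} : Set ℕ),
    S.carrier ≠ (AddSubmonoid.closure B : Set ℕ)

end NumericalSemigroup

/-- `alphaMin x a b c` is `min {k ≥ 1 : k·x ∈ ⟨a, b, c⟩}`. -/
noncomputable def alphaMin (x a b c : ℕ) : ℕ :=
  sInf {k : ℕ | 1 ≤ k ∧ (k * x) ∈ (AddSubmonoid.closure ({a, b, c} : Set ℕ) : Set ℕ)}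

/-!
Read the four row equations modulo 2. If every generator is odd, each row says that `f` has
the parity of the row sum. Conversely, suppose every row sum has the parity of `f`. If `f` is
odd, the rows force `n1`, `n2`, `n4`, `n3` to be odd one after another; if `f` is even, they
force `n1 ≡ n2 ≡ n3 ≡ n4 (mod 2)`, and the generators cannot all be even because a numerical
semigroup contains odd numbers.
-/

namespace NumericalSemigroup

lemma exists_odd_mem (S : NumericalSemigroup) : ∃ x ∈ S.carrier, Odd x := by
  obtain ⟨b, hb⟩ := S.cofinite.bddAbove
  refine ⟨2 * b + 1, ?_, odd_two_mul_add_one b⟩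
  by_contra h
  have := hb h
  omega

lemma exists_odd_of_carrier_eq_closure (S : NumericalSemigroup) {s : Set ℕ}
    (hS : S.carrier = AddSubmonoid.closure s) : ∃ n ∈ s, Odd n := by
  by_contra! hs
  have hle : AddSubmonoid.closure s ≤ AddSubmonoid.even ℕ :=
    AddSubmonoid.closure_le.2 fun n hn => Nat.not_odd_iff_even.1 (hs n hn)
  obtain ⟨x, hxS, hx⟩ := S.exists_odd_mem
  rw [hS] at hxS
  exact Nat.not_even_iff_odd.2 hx (hle hxS)

end NumericalSemigroup

namespace ZMod

lemma eq_zero_or_eq_one (x : ZMod 2) : x = 0 ∨ x = 1 := by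
  revert x; decide

lemma all_eq_one_or_all_eq_zero_iff {x y1 y2 y3 y4 : ZMod 2} :
    (x = 1 ∧ y1 = 1 ∧ y2 = 1 ∧ y3 = 1 ∧ y4 = 1) ∨ (x = 0 ∧ y1 = 0 ∧ y2 = 0 ∧ y3 = 0 ∧ y4 = 0) ↔
      y1 = x ∧ y2 = x ∧ y3 = x ∧ y4 = x := by
  rcases eq_zero_or_eq_one x with rfl | rfl <;> simp

end ZMod

lemma rowSums_eq_of_generators_eq_one {R : Type*} [CommRing R] {F N1 N2 N3 N4 B1 B2 B3 B4 A : R}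
    (e1 : F = -N1 + B2 * N2) (e2 : F = -N2 + B3 * N3)
    (e3 : F = B1 * N1 - N3 + B4 * N4) (e4 : F = B1 * N1 + A * N2 - N4)
    (h1 : N1 = 1) (h2 : N2 = 1) (h3 : N3 = 1) (h4 : N4 = 1) :
    B2 - 1 = F ∧ B3 - 1 = F ∧ B1 + B4 - 1 = F ∧ B1 + A - 1 = F := by
  subst h1 h2 h3 h4
  exact ⟨by linear_combination -e1, by linear_combination -e2, by linear_combination -e3,
    by linear_combination -e4⟩

lemma generators_eq_one_iff_rowSums_eq {F N1 N2 N3 N4 B1 B2 B3 B4 A : ZMod 2}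
    (e1 : F = -N1 + B2 * N2) (e2 : F = -N2 + B3 * N3)
    (e3 : F = B1 * N1 - N3 + B4 * N4) (e4 : F = B1 * N1 + A * N2 - N4)
    (hN : N1 = 1 ∨ N2 = 1 ∨ N3 = 1 ∨ N4 = 1) :
    (N1 = 1 ∧ N2 = 1 ∧ N3 = 1 ∧ N4 = 1) ↔
      (B2 - 1 = F ∧ B3 - 1 = F ∧ B1 + B4 - 1 = F ∧ B1 + A - 1 = F) := by
  refine ⟨fun ⟨h1, h2, h3, h4⟩ => rowSums_eq_of_generators_eq_one e1 e2 e3 e4 h1 h2 h3 h4, ?_⟩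
  rintro ⟨r1, r2, r3, r4⟩
  have two : (2 : ZMod 2) = 0 := rfl
  rcases ZMod.eq_zero_or_eq_one F with rfl | rfl
  · have h12 : N1 = N2 := by linear_combination e1 + N2 * r1
    have h23 : N2 = N3 := by linear_combination e2 + N3 * r2
    have h14 : N1 = N4 := by linear_combination -e4 - N1 * r4 + A * h12
    subst h12 h23 h14
    simp only [or_self] at hN
    exact ⟨hN, hN, hN, hN⟩
  · have h1 : N1 = 1 := by linear_combination e1 + N2 * r1 + (N2 - 1) * two
    have h2 : N2 = 1 := by linear_combination e2 + N3 * r2 + (N3 - 1) * two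
    subst h1 h2
    have h4 : N4 = 1 := by linear_combination e4 + r4
    subst h4
    exact ⟨rfl, rfl, by linear_combination e3 + r3, rfl⟩

theorem odd_generators_iff_pseudoSymmetric_fourGen_general
    (S : NumericalSemigroup) (n1 n2 n3 n4 : ℕ)
    (hmin : S.MinGen4 n1 n2 n3 n4)
    (α1 α2 α3 α4 : ℕ)
    (f : ℕ)
    (a : ℕ)
    (e1 : (f : ℤ) = -(n1 : ℤ) + ((α2 : ℤ) - 1) * n2)
    (e2 : (f : ℤ) = -(n2 : ℤ) + ((α3 : ℤ) - 1) * n3)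
    (e3 : (f : ℤ) = ((α1 : ℤ) - 1) * n1 - (n3 : ℤ) + ((α4 : ℤ) - 1) * n4)
    (e4 : (f : ℤ) = ((α1 : ℤ) - 1) * n1 + (a : ℤ) * n2 - (n4 : ℤ)) :
    (Odd n1 ∧ Odd n2 ∧ Odd n3 ∧ Odd n4) ↔
      (Odd f ∧ Odd (((α2 : ℤ) - 1) - 1) ∧ Odd (((α3 : ℤ) - 1) - 1) ∧
        Odd (((α1 : ℤ) - 1) + ((α4 : ℤ) - 1) - 1) ∧
        Odd (((α1 : ℤ) - 1) + (a : ℤ) - 1)) ∨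
      (Even f ∧ Even (((α2 : ℤ) - 1) - 1) ∧ Even (((α3 : ℤ) - 1) - 1) ∧
        Even (((α1 : ℤ) - 1) + ((α4 : ℤ) - 1) - 1) ∧
        Even (((α1 : ℤ) - 1) + (a : ℤ) - 1)) := by
  have hN : (n1 : ZMod 2) = 1 ∨ (n2 : ZMod 2) = 1 ∨ (n3 : ZMod 2) = 1 ∨ (n4 : ZMod 2) = 1 := by
    obtain ⟨n, hn, hodd⟩ := S.exists_odd_of_carrier_eq_closure hmin.2.1
    simp only [Set.mem_insert_iff, Set.mem_singleton_iff] at hn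
    rcases hn with rfl | rfl | rfl | rfl <;> simp [ZMod.natCast_eq_one_iff_odd, hodd]
  have cast_eq {x y : ℤ} (h : x = y) : (x : ZMod 2) = y := congrArg Int.cast h
  have E1 := cast_eq e1
  have E2 := cast_eq e2
  have E3 := cast_eq e3
  have E4 := cast_eq e4
  push_cast at E1 E2 E3 E4
  simp only [← ZMod.natCast_eq_one_iff_odd, ← ZMod.natCast_eq_zero_iff_even,
    ← ZMod.intCast_eq_one_iff_odd, ← ZMod.intCast_eq_zero_iff_even]
  push_cast
  rw [ZMod.all_eq_one_or_all_eq_zero_iff]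
  exact generators_eq_one_iff_rowSums_eq E1 E2 E3 E4 hN

/-- Parity criterion for the generators of a pseudo-symmetric numerical semigroup of
embedding dimension four, in terms of the rows of the RF-matrix of `F(S)/2`. -/
theorem odd_generators_iff_pseudoSymmetric_fourGen
    (S : NumericalSemigroup) (n1 n2 n3 n4 : ℕ)
    (hmin : S.MinGen4 n1 n2 n3 n4)
    (hps : S.PseudoSymmetric)
    (α1 α2 α3 α4 : ℕ)
    (hα1 : α1 = alphaMin n1 n2 n3 n4) (hα2 : α2 = alphaMin n2 n1 n3 n4)
    (hα3 : α3 = alphaMin n3 n1 n2 n4) (hα4 : α4 = alphaMin n4 n1 n2 n3)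
    (f : ℕ) (hf : 2 * f = S.frob)
    (a : ℕ)
    (e1 : (f : ℤ) = -(n1 : ℤ) + ((α2 : ℤ) - 1) * n2)
    (e2 : (f : ℤ) = -(n2 : ℤ) + ((α3 : ℤ) - 1) * n3)
    (e3 : (f : ℤ) = ((α1 : ℤ) - 1) * n1 - (n3 : ℤ) + ((α4 : ℤ) - 1) * n4)
    (e4 : (f : ℤ) = ((α1 : ℤ) - 1) * n1 + (a : ℤ) * n2 - (n4 : ℤ)) :
    (Odd n1 ∧ Odd n2 ∧ Odd n3 ∧ Odd n4) ↔
      (Odd f ∧ Odd (((α2 : ℤ) - 1) - 1) ∧ Odd (((α3 : ℤ) - 1) - 1) ∧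
        Odd (((α1 : ℤ) - 1) + ((α4 : ℤ) - 1) - 1) ∧
        Odd (((α1 : ℤ) - 1) + (a : ℤ) - 1)) ∨
      (Even f ∧ Even (((α2 : ℤ) - 1) - 1) ∧ Even (((α3 : ℤ) - 1) - 1) ∧
        Even (((α1 : ℤ) - 1) + ((α4 : ℤ) - 1) - 1) ∧
        Even (((α1 : ℤ) - 1) + (a : ℤ) - 1)) :=
  odd_generators_iff_pseudoSymmetric_fourGen_general S n1 n2 n3 n4 hmin α1 α2 α3 α4 f a e1 e2 e3 e4
end

section
/- Let S be the numerical semigroup generated by positive integers n_1, ..., n_r, and let α_1 = min{k ≥ 1 : k·n_1 lies in the submonoid generated by n_2, ..., n_r}. If α_1 = n_2, then S is equal to the submonoid generated by n_1 and n_2. -/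
/-- Auxiliary: if the smallest positive `k` with `k * N1 ∈ T` is at least `N2`,
`N2 ∈ T`, and `N1, N2 > 0`, then every element of `T` is a combination of `N1, N2`. -/
theorem aux_decomp (N1 N2 : ℕ) (T : AddSubmonoid ℕ) (hN1 : 0 < N1) (hN2 : 0 < N2)
    (hN2T : N2 ∈ T) (hmin : ∀ k : ℕ, 1 ≤ k → k < N2 → k * N1 ∉ T) :
    ∀ t ∈ T, ∃ a b : ℕ, t = a * N1 + b * N2 := by
  have hcop : Nat.Coprime N1 N2 := by
    by_contra hg
    have hg1 : Nat.gcd N1 N2 ≠ 1 := hg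
    obtain ⟨a, ha⟩ := Nat.gcd_dvd_left N1 N2
    obtain ⟨b, hb⟩ := Nat.gcd_dvd_right N1 N2
    have hg0 : Nat.gcd N1 N2 ≠ 0 := by
      intro h0; rw [h0, zero_mul] at ha; omega
    have hb1 : 1 ≤ b := by
      rcases Nat.eq_zero_or_pos b with h0 | h1
      · rw [h0, mul_zero] at hb; omega
      · exact h1
    have hbN2 : b < N2 := by
      have hlt : 1 * b < Nat.gcd N1 N2 * b := mul_lt_mul_of_pos_right (by omega) hb1
      rw [one_mul] at hlt
      rw [hb]; exact hlt
    have hmem : b * N1 ∈ T := by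
      have heq : b * N1 = a * N2 := by
        conv_lhs => rw [ha]
        conv_rhs => rw [hb]
        ring
      rw [heq]
      simpa [nsmul_eq_mul] using T.nsmul_mem hN2T a
    exact hmin b hb1 hbN2 hmem
  intro t ht
  haveI : NeZero N2 := ⟨by omega⟩
  set a := ((t : ZMod N2) * (N1 : ZMod N2)⁻¹).val with hadef
  have haN2 : a < N2 := ZMod.val_lt _
  have hu : IsUnit ((N1 : ℕ) : ZMod N2) := (ZMod.isUnit_iff_coprime _ _).mpr hcop
  have hcast : ((a * N1 : ℕ) : ZMod N2) = (t : ZMod N2) := by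
    push_cast
    rw [hadef, ZMod.natCast_val, ZMod.cast_id]
    rw [mul_assoc, ZMod.inv_mul_of_unit _ hu, mul_one]
  have hmod : a * N1 ≡ t [MOD N2] := (ZMod.natCast_eq_natCast_iff _ _ _).mp hcast
  rcases le_or_gt (a * N1) t with hle | hlt
  · obtain ⟨c, hc⟩ := (Nat.modEq_iff_dvd' hle).mp hmod
    refine ⟨a, c, ?_⟩
    have := (Nat.sub_eq_iff_eq_add hle).mp hc
    rw [this]; ring
  · exfalso
    obtain ⟨c, hc⟩ := (Nat.modEq_iff_dvd' hlt.le).mp hmod.symm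
    have heq : a * N1 = t + N2 * c := by
      have := (Nat.sub_eq_iff_eq_add hlt.le).mp hc; rw [this]; ring
    have hc1 : 1 ≤ c := by
      rcases Nat.eq_zero_or_pos c with h0 | h1
      · rw [h0, mul_zero, add_zero] at heq; omega
      · exact h1
    have hmem : a * N1 ∈ T := by
      rw [heq]
      refine T.add_mem ht ?_
      simpa [nsmul_eq_mul, mul_comm] using T.nsmul_mem hN2T c
    have ha1 : 1 ≤ a := by
      rcases Nat.eq_zero_or_pos a with h0 | h1
      · rw [h0, zero_mul] at heq hlt; omega
      · exact h1
    exact hmin a ha1 haN2 hmem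

/-- If `α₁ = min {k ≥ 1 : k·n₁ ∈ ⟨n₂, …, n_r⟩}` equals `n₂`, then the numerical
semigroup generated by `n₁, …, n_r` is generated by `n₁` and `n₂` alone. -/
theorem eq_closure_pair_of_alpha_eq
    (r : ℕ) (hr : 2 ≤ r) (n : Fin r → ℕ) (hpos : ∀ i, 0 < n i)
    (S : NumericalSemigroup)
    (hS : S.carrier = (AddSubmonoid.closure (Set.range n) : Set ℕ))
    (α1 : ℕ)
    (hα1 : α1 = sInf {k : ℕ | 1 ≤ k ∧
      k * n ⟨0, by omega⟩ ∈
        (AddSubmonoid.closure (n '' {i | i ≠ ⟨0, by omega⟩}) : Set ℕ)})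
    (h : α1 = n ⟨1, by omega⟩) :
    S.carrier = (AddSubmonoid.closure ({n ⟨0, by omega⟩, n ⟨1, by omega⟩} : Set ℕ) : Set ℕ) := by
  have h01 : (⟨1, by omega⟩ : Fin r) ≠ ⟨0, by omega⟩ := by simp
  have hN2T : n (⟨1, by omega⟩ : Fin r) ∈
      AddSubmonoid.closure (n '' {i | i ≠ ⟨0, by omega⟩}) :=
    AddSubmonoid.subset_closure ⟨⟨1, by omega⟩, h01, rfl⟩
  have hmin : ∀ k : ℕ, 1 ≤ k → k < n (⟨1, by omega⟩ : Fin r) →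
      k * n (⟨0, by omega⟩ : Fin r) ∉
        AddSubmonoid.closure (n '' {i | i ≠ ⟨0, by omega⟩}) := by
    intro k hk1 hk2 hkT
    have hle : sInf {k : ℕ | 1 ≤ k ∧
        k * n ⟨0, by omega⟩ ∈
          (AddSubmonoid.closure (n '' {i | i ≠ (⟨0, by omega⟩ : Fin r)}) : Set ℕ)} ≤ k :=
      Nat.sInf_le ⟨hk1, hkT⟩
    rw [← hα1, h] at hle
    omega
  have main := aux_decomp (n ⟨0, by omega⟩) (n ⟨1, by omega⟩)
    (AddSubmonoid.closure (n '' {i | i ≠ ⟨0, by omega⟩})) (hpos _) (hpos _) hN2T hmin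
  have h1 : AddSubmonoid.closure (Set.range n) ≤
      AddSubmonoid.closure ({n ⟨0, by omega⟩, n ⟨1, by omega⟩} : Set ℕ) := by
    rw [AddSubmonoid.closure_le]
    rintro x ⟨i, rfl⟩
    by_cases hi : i = (⟨0, by omega⟩ : Fin r)
    · subst hi
      exact AddSubmonoid.subset_closure (Set.mem_insert _ _)
    · have hiT : n i ∈ AddSubmonoid.closure (n '' {j | j ≠ (⟨0, by omega⟩ : Fin r)}) :=
        AddSubmonoid.subset_closure ⟨i, hi, rfl⟩
      obtain ⟨a, b, hab⟩ := main _ hiT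
      rw [hab]
      refine AddSubmonoid.add_mem _ ?_ ?_
      · have := (AddSubmonoid.closure ({n ⟨0, by omega⟩, n ⟨1, by omega⟩} : Set ℕ)).nsmul_mem
          (AddSubmonoid.subset_closure (Set.mem_insert _ _)) a
        simpa [nsmul_eq_mul] using this
      · have := (AddSubmonoid.closure ({n ⟨0, by omega⟩, n ⟨1, by omega⟩} : Set ℕ)).nsmul_mem
          (AddSubmonoid.subset_closure (Set.mem_insert_of_mem _ rfl)) b
        simpa [nsmul_eq_mul] using this
  have h2 : AddSubmonoid.closure ({n ⟨0, by omega⟩, n ⟨1, by omega⟩} : Set ℕ) ≤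
      AddSubmonoid.closure (Set.range n) := by
    rw [AddSubmonoid.closure_le]
    rintro x (rfl | rfl)
    · exact AddSubmonoid.subset_closure ⟨_, rfl⟩
    · exact AddSubmonoid.subset_closure ⟨_, rfl⟩
  rw [hS]
  exact congrArg SetLike.coe (le_antisymm h1 h2)
end

section
/- Let α_1, α_2, α_3, α_4 be odd integers greater than 1, define n_1 = (α_2−1)(α_3−1)α_4 + α_2, n_2 = (α_3−1)(α_4−1)α_1 + α_3, n_3 = (α_4−1)(α_1−1)α_2 + α_4, n_4 = (α_1−1)(α_2−1)α_3 + α_1, and assume gcd(n_1, n_2, n_3, n_4) = 1. Let S be the numerical semigroup generated by n_1, n_2, n_3, n_4 and set f = (α_2−1)n_2 − n_1. Then PF(S) = {f, 2f, 3f}; in particular F(S) = 3f and 2f = (α_2−2)n_2 + (α_3−1)n_3 − n_1. -/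
/-!
Put `f = (α₁ - 1)(α₂ - 1)(α₃ - 1)(α₄ - 1) - 1`. Then `f + nᵢ₋₁ = (αᵢ - 1)nᵢ` for every `i`
(indices mod 4), so by induction `k f + nᵢ ∈ S` for all `k` and `i`: every `k f ∉ S` is
pseudo-Frobenius.

Conversely, since `gcd(n₃, n₄) = 1`, the relation lattice of `(n₁, n₂, n₃, n₄)` is spanned by the
cyclic relations `αᵢnᵢ = nᵢ₋₁ + (αᵢ₊₁ - 1)nᵢ₊₁`. Working in coordinates for this lattice, the `n₁`
elements `b n₂ + c n₃ + d n₄` with `(b, c, d)` in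
`{b < α₂ - 1, c < α₃ - 1, d < α₄} ∪ {b < α₂ - 1, c = α₃ - 1, d = 0} ∪ {(α₂ - 1, 0, 0)}`
lie in `S`, stay out of `S` after subtracting `n₁`, and are pairwise incongruent mod `n₁`: they
form the Apéry set of `n₁`. A gap `x` with `x + n₁ ∈ S` is `w - n₁` for such an element `w`, and
if `x` is pseudo-Frobenius then no exponent of `w` can be raised inside this set; that leaves the
three exponents giving `f + n₁`, `2f + n₁`, `3f + n₁`. Finally `F(S)` is the largest
pseudo-Frobenius number.
-/

namespace AddSubmonoid

theorem mem_closure_quad {a b c d x : ℕ} :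
    x ∈ closure ({a, b, c, d} : Set ℕ) ↔ ∃ p q r s : ℕ, p * a + q * b + r * c + s * d = x := by
  have hsplit : ({a, b, c, d} : Set ℕ) = {a, b} ∪ {c, d} := by
    ext; simp only [Set.mem_insert_iff, Set.mem_union, Set.mem_singleton_iff, or_assoc]
  simp only [hsplit, closure_union, mem_sup, mem_closure_pair, smul_eq_mul]
  constructor
  · rintro ⟨_, ⟨p, q, rfl⟩, _, ⟨r, s, rfl⟩, rfl⟩
    exact ⟨p, q, r, s, by ring⟩
  · rintro ⟨p, q, r, s, rfl⟩
    exact ⟨_, ⟨p, q, rfl⟩, _, ⟨r, s, rfl⟩, by ring⟩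

/-- The Apéry set `Ap(M, n) = {w ∈ M | w - n ∉ M}`, with `w - n` read in `ℤ` (no truncation). -/
def apery (M : AddSubmonoid ℕ) (n : ℕ) : Set ℕ :=
  {w | w ∈ M ∧ ∀ u, u + n = w → u ∉ M}

theorem mem_iff_le_of_modEq {M : AddSubmonoid ℕ} {n w x : ℕ} (hn : n ∈ M) (hw : w ∈ M.apery n)
    (hx : x ≡ w [MOD n]) : x ∈ M ↔ w ≤ x := by
  constructor
  · intro hxM
    by_contra! hlt
    obtain ⟨k, hk⟩ := (Nat.modEq_iff_dvd' hlt.le).mp hx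
    cases k with
    | zero => omega
    | succ k =>
      exact hw.2 (x + k * n) (by rw [Nat.sub_eq_iff_eq_add hlt.le] at hk; rw [hk]; ring)
        (M.add_mem hxM (by simpa using M.nsmul_mem hn k))
  · intro hle
    obtain ⟨k, hk⟩ := (Nat.modEq_iff_dvd' hle).mp hx.symm
    rw [Nat.sub_eq_iff_eq_add hle] at hk
    rw [hk]
    exact M.add_mem (by simpa [mul_comm] using M.nsmul_mem hn k) hw.1

theorem mul_add_mem_closure {G : Set ℕ} {f : ℕ}
    (h : ∀ g ∈ G, ∃ g' ∈ G, ∃ s ∈ closure G, f + g = g' + s) (k : ℕ) :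
    ∀ g ∈ G, k * f + g ∈ closure G := by
  induction k with
  | zero => simpa using fun g hg => subset_closure hg
  | succ k ih =>
    intro g hg
    obtain ⟨g', hg', s, hs, hfg⟩ := h g hg
    rw [add_mul, one_mul, add_assoc, hfg, ← add_assoc]
    exact add_mem (ih g' hg') hs

end AddSubmonoid

namespace NumericalSemigroup

theorem mem_PF_of_forall_add_mem {S : NumericalSemigroup} {G : Set ℕ}
    (hS : S.carrier = AddSubmonoid.closure G) {x : ℕ} (hx : x ∉ S.carrier)
    (h : ∀ g ∈ G, x + g ∈ S.carrier) : x ∈ S.PF := by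
  refine ⟨hx, fun s hs hs0 => ?_⟩
  rw [hS] at hs h ⊢
  suffices s = 0 ∨ x + s ∈ AddSubmonoid.closure G from this.resolve_left hs0
  clear hs0
  induction hs using AddSubmonoid.closure_induction with
  | mem g hg => exact .inr (h g hg)
  | zero => exact .inl rfl
  | add a b _ hb iha ihb =>
    rcases iha with rfl | ha
    · simpa using ihb
    · exact .inr (by simpa [add_assoc] using (AddSubmonoid.closure G).add_mem ha hb)

theorem le_frob (S : NumericalSemigroup) {x : ℕ} (hx : x ∉ S.carrier) : x ≤ S.frob :=
  le_csSup S.cofinite.bddAbove hx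

theorem frob_mem_PF (S : NumericalSemigroup) {x : ℕ} (hx : x ∉ S.carrier) : S.frob ∈ S.PF := by
  refine ⟨Set.Nonempty.csSup_mem ⟨x, hx⟩ S.cofinite, fun s _ hs0 => ?_⟩
  by_contra h
  have := S.le_frob h
  omega

end NumericalSemigroup

/-- Exponents `(b, c, d)` of the elements `b n₂ + c n₃ + d n₄` of the Apéry set of `n₁`. -/
def IsAperyExp (A2 A3 A4 b c d : ℤ) : Prop :=
  0 ≤ b ∧ 0 ≤ c ∧ 0 ≤ d ∧ b ≤ A2 - 1 ∧ c ≤ A3 - 1 ∧ d ≤ A4 - 1 ∧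
    (c = A3 - 1 → d = 0) ∧ (b = A2 - 1 → c = 0 ∧ d = 0)

/-- In lattice coordinates `(x, y, z)`: `b n₂ + c n₃ + d n₄ - n₁` has no representation with
nonnegative coefficients. -/
theorem IsAperyExp.false_of_nonneg {A1 A2 A3 A4 b c d x y z : ℤ}
    (hA1 : 2 ≤ A1) (hA2 : 2 ≤ A2) (hA3 : 2 ≤ A3) (hA4 : 2 ≤ A4) (hv : IsAperyExp A2 A3 A4 b c d)
    (h1 : 1 ≤ A1 * x - y) (h2 : 0 ≤ b - (A2 - 1) * x + A2 * y - z)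
    (h3 : 0 ≤ c - (A3 - 1) * y + A3 * z) (h4 : 0 ≤ d - x - (A4 - 1) * z) : False := by
  obtain ⟨hb0, hc0, hd0, hb, hc, hd, hcd, hbcd⟩ := hv
  rcases le_or_gt 1 y with hy | hy
  · have hx : 1 ≤ x := by nlinarith
    have hz : z ≤ 0 := by nlinarith
    have hy1 : y = 1 := by nlinarith
    subst hy1
    have hz0 : z = 0 := by nlinarith
    subst hz0
    have := hcd (by linarith)
    linarith
  · have hzy : y ≤ z := by nlinarith
    have hxy : x - y ≤ 1 := by nlinarith
    have hx : 0 ≤ x := by nlinarith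
    have hxy1 : x = y + 1 := by
      rcases hx.eq_or_lt with rfl | hx <;> nlinarith
    subst hxy1
    have hb1 : b = A2 - 1 := by linarith
    obtain ⟨rfl, rfl⟩ := hbcd hb1
    have hz : z = y := by linarith
    subst hz
    nlinarith

/-- In lattice coordinates `(x, A₁x, z)`: a relation `b n₂ + c n₃ + d n₄ = b' n₂ + c' n₃ + d' n₄`
between exponents below `(α₂, α₃, α₄)` is trivial. -/
theorem eq_zero_of_abs_le {A1 A2 A3 A4 x z : ℤ}
    (hA1 : 2 ≤ A1) (hA2 : 2 ≤ A2) (hA3 : 2 ≤ A3) (hA4 : 2 ≤ A4)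
    (h2 : |(A1 * A2 - A2 + 1) * x - z| ≤ A2 - 1) (h3 : |A3 * z - (A3 - 1) * A1 * x| ≤ A3 - 1)
    (h4 : |x + (A4 - 1) * z| ≤ A4 - 1) : x = 0 ∧ z = 0 := by
  rw [abs_le] at h2 h3 h4
  have hK : A2 + 1 ≤ A1 * A2 - A2 + 1 := by nlinarith
  have hx : x = 0 := by
    rcases lt_trichotomy x 0 with hx | hx | hx
    · have hz : 0 ≤ z := by nlinarith
      nlinarith
    · exact hx
    · have hz : z ≤ 0 := by nlinarith
      nlinarith
  subst hx
  refine ⟨rfl, ?_⟩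
  rcases lt_trichotomy z 0 with hz | hz | hz <;> nlinarith

/-- `nᵢ = gen αᵢ₊₁ αᵢ₊₂ αᵢ₊₃`, indices mod 4. -/
def gen (a b c : ℕ) : ℕ := (a - 1) * (b - 1) * c + a

theorem gen_pos {a : ℕ} (b c : ℕ) (ha : 1 ≤ a) : 0 < gen a b c := by
  unfold gen; omega

theorem natCast_gen {a b : ℕ} (c : ℕ) (ha : 1 ≤ a) (hb : 1 ≤ b) :
    (gen a b c : ℤ) = ((a : ℤ) - 1) * ((b : ℤ) - 1) * c + a := by
  simp [gen, Nat.cast_sub ha, Nat.cast_sub hb]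

theorem mul_gen {p q r s : ℕ} (hp : 1 ≤ p) (hq : 1 ≤ q) (hr : 1 ≤ r) (hs : 1 ≤ s) :
    p * gen q r s = gen p q r + (q - 1) * gen r s p := by
  obtain ⟨p, rfl⟩ := Nat.exists_eq_add_of_le' hp
  obtain ⟨q, rfl⟩ := Nat.exists_eq_add_of_le' hq
  obtain ⟨r, rfl⟩ := Nat.exists_eq_add_of_le' hr
  obtain ⟨s, rfl⟩ := Nat.exists_eq_add_of_le' hs
  simp only [gen, Nat.add_sub_cancel]
  ring

theorem add_gen {f p q r s : ℕ} (hp : 1 ≤ p) (hq : 1 ≤ q) (hr : 1 ≤ r) (hs : 1 ≤ s)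
    (hf : f + 1 = (p - 1) * (q - 1) * (r - 1) * (s - 1)) : f + gen p q r = (p - 1) * gen q r s := by
  obtain ⟨p, rfl⟩ := Nat.exists_eq_add_of_le' hp
  obtain ⟨q, rfl⟩ := Nat.exists_eq_add_of_le' hq
  obtain ⟨r, rfl⟩ := Nat.exists_eq_add_of_le' hr
  obtain ⟨s, rfl⟩ := Nat.exists_eq_add_of_le' hs
  simp only [gen, Nat.add_sub_cancel] at hf ⊢
  linarith

theorem sub_one_mul_eq_sub_two_mul_add {a : ℕ} (n : ℕ) (ha : 2 ≤ a) :
    (a - 1) * n = (a - 2) * n + n := by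
  rw [← Nat.succ_mul]; congr 1; omega

structure Alphas where
  (α1 α2 α3 α4 : ℕ)
  two_le_α1 : 2 ≤ α1
  two_le_α2 : 2 ≤ α2
  two_le_α3 : 2 ≤ α3
  two_le_α4 : 2 ≤ α4
  gcd_eq_one : (((gen α2 α3 α4).gcd (gen α3 α4 α1)).gcd (gen α4 α1 α2)).gcd (gen α1 α2 α3) = 1

namespace Alphas

variable (D : Alphas)

def n1 : ℕ := gen D.α2 D.α3 D.α4
def n2 : ℕ := gen D.α3 D.α4 D.α1
def n3 : ℕ := gen D.α4 D.α1 D.α2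
def n4 : ℕ := gen D.α1 D.α2 D.α3

def gens : Set ℕ := {D.n1, D.n2, D.n3, D.n4}

def semigroup : AddSubmonoid ℕ := AddSubmonoid.closure D.gens

theorem pos_of_mem_gens {n : ℕ} (hn : n ∈ D.gens) : 0 < n := by
  have := D.two_le_α1; have := D.two_le_α2; have := D.two_le_α3; have := D.two_le_α4
  simp only [gens, Set.mem_insert_iff, Set.mem_singleton_iff] at hn
  rcases hn with rfl | rfl | rfl | rfl <;> exact gen_pos _ _ (by omega)

theorem mem_semigroup_of_mem_gens {n : ℕ} (hn : n ∈ D.gens) : n ∈ D.semigroup :=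
  AddSubmonoid.subset_closure hn

theorem n1_pos : 0 < D.n1 := D.pos_of_mem_gens (by simp [gens])

theorem n1_mem : D.n1 ∈ D.semigroup := D.mem_semigroup_of_mem_gens (by simp [gens])

/-- `f = (α₂ - 1)n₂ - n₁`, which is symmetric in the `αᵢ`. -/
def f : ℕ := (D.α1 - 1) * (D.α2 - 1) * (D.α3 - 1) * (D.α4 - 1) - 1

theorem f_add_one : D.f + 1 = (D.α1 - 1) * (D.α2 - 1) * (D.α3 - 1) * (D.α4 - 1) := by
  have := D.two_le_α1; have := D.two_le_α2; have := D.two_le_α3; have := D.two_le_α4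
  have : 0 < (D.α1 - 1) * (D.α2 - 1) * (D.α3 - 1) * (D.α4 - 1) :=
    Nat.mul_pos (Nat.mul_pos (Nat.mul_pos (by omega) (by omega)) (by omega)) (by omega)
  unfold f; omega

theorem f_add_n1 : D.f + D.n1 = (D.α2 - 1) * D.n2 := by
  have := D.two_le_α1; have := D.two_le_α2; have := D.two_le_α3; have := D.two_le_α4
  exact add_gen (by omega) (by omega) (by omega) (by omega) (by rw [f_add_one]; ring)

theorem f_add_n2 : D.f + D.n2 = (D.α3 - 1) * D.n3 := by
  have := D.two_le_α1; have := D.two_le_α2; have := D.two_le_α3; have := D.two_le_α4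
  exact add_gen (by omega) (by omega) (by omega) (by omega) (by rw [f_add_one]; ring)

theorem f_add_n3 : D.f + D.n3 = (D.α4 - 1) * D.n4 := by
  have := D.two_le_α1; have := D.two_le_α2; have := D.two_le_α3; have := D.two_le_α4
  exact add_gen (by omega) (by omega) (by omega) (by omega) (by rw [f_add_one]; ring)

theorem f_add_n4 : D.f + D.n4 = (D.α1 - 1) * D.n1 := by
  have := D.two_le_α1; have := D.two_le_α2; have := D.two_le_α3; have := D.two_le_α4
  exact add_gen (by omega) (by omega) (by omega) (by omega) D.f_add_one

theorem coprime_n4_n3 : D.n4.Coprime D.n3 := by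
  have := D.two_le_α1; have := D.two_le_α2; have := D.two_le_α3; have := D.two_le_α4
  set g := D.n4.gcd D.n3
  have hg4 : g ∣ D.n4 := Nat.gcd_dvd_left _ _
  have hg3 : g ∣ D.n3 := Nat.gcd_dvd_right _ _
  have hg2 : g ∣ D.n2 := by
    have h : D.α3 * D.n3 = D.n2 + (D.α4 - 1) * D.n4 :=
      mul_gen (by omega) (by omega) (by omega) (by omega)
    have h' : g ∣ D.n2 + (D.α4 - 1) * D.n4 := h ▸ hg3.mul_left _
    exact (Nat.dvd_add_left (hg4.mul_left _)).mp h'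
  have hg1 : g ∣ D.n1 := by
    have h : D.α2 * D.n2 = D.n1 + (D.α3 - 1) * D.n3 :=
      mul_gen (by omega) (by omega) (by omega) (by omega)
    have h' : g ∣ D.n1 + (D.α3 - 1) * D.n3 := h ▸ hg2.mul_left _
    exact (Nat.dvd_add_left (hg3.mul_left _)).mp h'
  have := D.gcd_eq_one
  exact Nat.dvd_one.mp (this ▸ Nat.dvd_gcd (Nat.dvd_gcd (Nat.dvd_gcd hg1 hg2) hg3) hg4)

theorem exists_coords_of_relation {x1 x2 x3 x4 : ℤ}
    (h : x1 * D.n1 + x2 * D.n2 + x3 * D.n3 + x4 * D.n4 = 0) :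
    ∃ x y z : ℤ, x1 = D.α1 * x - y ∧ x2 = -(D.α2 - 1) * x + D.α2 * y - z ∧
      x3 = -(D.α3 - 1) * y + D.α3 * z ∧ x4 = -x - (D.α4 - 1) * z := by
  have := D.two_le_α1; have := D.two_le_α2; have := D.two_le_α3; have := D.two_le_α4
  have hN1 : (D.n1 : ℤ) = (D.α2 - 1) * (D.α3 - 1) * D.α4 + D.α2 :=
    natCast_gen _ (by omega) (by omega)
  have hN2 : (D.n2 : ℤ) = (D.α3 - 1) * (D.α4 - 1) * D.α1 + D.α3 :=
    natCast_gen _ (by omega) (by omega)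
  have hN3 : (D.n3 : ℤ) = (D.α4 - 1) * (D.α1 - 1) * D.α2 + D.α4 :=
    natCast_gen _ (by omega) (by omega)
  have hN4 : (D.n4 : ℤ) = (D.α1 - 1) * (D.α2 - 1) * D.α3 + D.α1 :=
    natCast_gen _ (by omega) (by omega)
  -- Clearing `x1` with `α₂n₂ = n₁ + (α₃ - 1)n₃` and then `x2` with `α₃n₃ = n₂ + (α₄ - 1)n₄`
  -- leaves a relation between `n₃` and `n₄` alone, i.e. a multiple of `n₄e₃ - n₃e₄`.
  set v := x2 + D.α2 * x1
  have hw : (x3 - (D.α3 - 1) * x1 + D.α3 * v) * D.n3 + (x4 - (D.α4 - 1) * v) * D.n4 = 0 := by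
    simp only [hN1, hN2, hN3, hN4] at h ⊢; linear_combination h
  obtain ⟨t, ht⟩ : (D.n4 : ℤ) ∣ x3 - (D.α3 - 1) * x1 + D.α3 * v :=
    D.coprime_n4_n3.isCoprime.dvd_of_dvd_mul_right
      ⟨-(x4 - (D.α4 - 1) * v), by linear_combination hw⟩
  have h4 : x4 - (D.α4 - 1) * v = -(t * D.n3) := by
    have hn4 : (D.n4 : ℤ) ≠ 0 := Nat.cast_ne_zero.mpr (D.pos_of_mem_gens (by simp [gens])).ne'
    apply mul_left_cancel₀ hn4
    linear_combination hw - D.n3 * ht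
  refine ⟨t, t * D.α1 - x1, t * (D.α1 * D.α2 - D.α2 + 1) - v, by ring, by ring, ?_, ?_⟩
  · rw [hN4] at ht; linear_combination ht
  · rw [hN3] at h4; linear_combination h4

def aperyVal (v : ℕ × ℕ × ℕ) : ℕ := v.1 * D.n2 + v.2.1 * D.n3 + v.2.2 * D.n4

open Finset in
def aperyExps : Finset (ℕ × ℕ × ℕ) :=
  (range (D.α2 - 1) ×ˢ range (D.α3 - 1) ×ˢ range D.α4) ∪
    (range (D.α2 - 1)).image (fun b => (b, D.α3 - 1, 0)) ∪ {(D.α2 - 1, 0, 0)}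

theorem mem_aperyExps {b c d : ℕ} :
    (b, c, d) ∈ D.aperyExps ↔ (b < D.α2 - 1 ∧ c < D.α3 - 1 ∧ d < D.α4) ∨
      (b < D.α2 - 1 ∧ c = D.α3 - 1 ∧ d = 0) ∨ (b = D.α2 - 1 ∧ c = 0 ∧ d = 0) := by
  simp only [aperyExps, Finset.mem_union, Finset.mem_product, Finset.mem_range, Finset.mem_image,
    Finset.mem_singleton, Prod.mk.injEq, or_assoc]
  constructor
  · rintro (h | ⟨b', hb', rfl, rfl, rfl⟩ | h) <;> tauto
  · rintro (h | ⟨hb, rfl, rfl⟩ | h)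
    · exact .inl h
    · exact .inr (.inl ⟨b, hb, rfl, rfl, rfl⟩)
    · exact .inr (.inr h)

theorem isAperyExp_of_mem {v : ℕ × ℕ × ℕ} (hv : v ∈ D.aperyExps) :
    IsAperyExp D.α2 D.α3 D.α4 v.1 v.2.1 v.2.2 := by
  have := D.two_le_α2; have := D.two_le_α3; have := D.two_le_α4
  obtain ⟨b, c, d⟩ := v
  rw [mem_aperyExps] at hv
  simp only [IsAperyExp]
  omega

theorem card_aperyExps : D.aperyExps.card = D.n1 := by
  have := D.two_le_α2; have := D.two_le_α3
  rw [aperyExps, Finset.card_union_of_disjoint, Finset.card_union_of_disjoint,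
    Finset.card_product, Finset.card_product, Finset.card_image_of_injective _
      (fun _ _ h => (Prod.mk.inj h).1), Finset.card_singleton]
  · simp only [Finset.card_range, n1, gen]
    rw [← Nat.mul_assoc]; omega
  · simp only [Finset.disjoint_left, Finset.mem_product, Finset.mem_range, Finset.mem_image,
      not_exists, not_and, and_imp, Prod.forall, Prod.mk.injEq]
    omega
  · simp only [Finset.disjoint_left, Finset.mem_union, Finset.mem_product, Finset.mem_range,
      Finset.mem_image, Finset.mem_singleton, Prod.forall, Prod.mk.injEq, ↓existsAndEq, true_and,
      not_and]
    omega

theorem aperyVal_mem (v : ℕ × ℕ × ℕ) : D.aperyVal v ∈ D.semigroup :=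
  AddSubmonoid.mem_closure_quad.mpr ⟨0, v.1, v.2.1, v.2.2, by simp [aperyVal]⟩

theorem aperyVal_mem_apery {v : ℕ × ℕ × ℕ} (hv : v ∈ D.aperyExps) :
    D.aperyVal v ∈ D.semigroup.apery D.n1 := by
  refine ⟨D.aperyVal_mem v, fun u hu hmem => ?_⟩
  obtain ⟨p, q, r, s, rfl⟩ := AddSubmonoid.mem_closure_quad.mp hmem
  have hrel : ((p : ℤ) + 1) * D.n1 + (q - v.1) * D.n2 + (r - v.2.1) * D.n3 + (s - v.2.2) * D.n4
      = 0 := by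
    have := congrArg (Nat.cast : ℕ → ℤ) hu
    push_cast [aperyVal] at this
    linear_combination this
  obtain ⟨x, y, z, h1, h2, h3, h4⟩ := D.exists_coords_of_relation hrel
  have := D.two_le_α1; have := D.two_le_α2; have := D.two_le_α3; have := D.two_le_α4
  exact (D.isAperyExp_of_mem hv).false_of_nonneg (A1 := D.α1) (x := x) (y := y) (z := z)
    (by omega) (by omega) (by omega) (by omega)
    (by linarith) (by linarith) (by linarith) (by linarith)

theorem aperyVal_injOn : Set.InjOn D.aperyVal D.aperyExps := by
  intro v hv v' hv' h
  have hrel : (0 : ℤ) * D.n1 + (v.1 - v'.1 : ℤ) * D.n2 + (v.2.1 - v'.2.1 : ℤ) * D.n3 +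
      (v.2.2 - v'.2.2 : ℤ) * D.n4 = 0 := by
    have := congrArg (Nat.cast : ℕ → ℤ) h
    push_cast [aperyVal] at this
    linear_combination this
  obtain ⟨x, y, z, h1, h2, h3, h4⟩ := D.exists_coords_of_relation hrel
  obtain rfl : y = D.α1 * x := by linarith
  obtain ⟨_, _, _, hb, hc, hd, -⟩ := D.isAperyExp_of_mem hv
  obtain ⟨_, _, _, hb', hc', hd', -⟩ := D.isAperyExp_of_mem hv'
  have := D.two_le_α1; have := D.two_le_α2; have := D.two_le_α3; have := D.two_le_α4
  obtain ⟨rfl, rfl⟩ := eq_zero_of_abs_le (A1 := D.α1) (A2 := D.α2) (A3 := D.α3) (A4 := D.α4)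
    (x := x) (z := z) (by omega) (by omega) (by omega) (by omega)
    (abs_le.2 ⟨by linarith, by linarith⟩) (abs_le.2 ⟨by linarith, by linarith⟩)
    (abs_le.2 ⟨by linarith, by linarith⟩)
  exact Prod.ext (by omega) (Prod.ext (by omega) (by omega))

theorem aperyVal_modEq_injOn {v v' : ℕ × ℕ × ℕ} (hv : v ∈ D.aperyExps) (hv' : v' ∈ D.aperyExps)
    (h : D.aperyVal v ≡ D.aperyVal v' [MOD D.n1]) : v = v' :=
  D.aperyVal_injOn hv hv' <| le_antisymm
    ((AddSubmonoid.mem_iff_le_of_modEq D.n1_mem (D.aperyVal_mem_apery hv) h.symm).mp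
      (D.aperyVal_mem v'))
    ((AddSubmonoid.mem_iff_le_of_modEq D.n1_mem (D.aperyVal_mem_apery hv') h).mp
      (D.aperyVal_mem v))

theorem exists_aperyVal_modEq (x : ℕ) : ∃ v ∈ D.aperyExps, x ≡ D.aperyVal v [MOD D.n1] := by
  have hmod : ∀ y, y % D.n1 ∈ Finset.range D.n1 :=
    fun y => Finset.mem_range.2 (Nat.mod_lt _ D.n1_pos)
  obtain ⟨v, hv, hx⟩ := Finset.surj_on_of_inj_on_of_card_le (fun v _ => D.aperyVal v % D.n1)
    (fun v _ => hmod _) (fun _ _ hv hv' h => D.aperyVal_modEq_injOn hv hv' h)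
    (by rw [Finset.card_range, card_aperyExps]) (x % D.n1) (hmod x)
  exact ⟨v, hv, hx⟩

theorem aperyVal_eq_f_add_n1 : D.aperyVal (D.α2 - 1, 0, 0) = D.f + D.n1 := by
  simp [aperyVal, D.f_add_n1]

theorem aperyVal_eq_two_mul_f_add_n1 :
    D.aperyVal (D.α2 - 2, D.α3 - 1, 0) = 2 * D.f + D.n1 := by
  have := D.f_add_n1; have := D.f_add_n2
  have := sub_one_mul_eq_sub_two_mul_add D.n2 D.two_le_α2
  simp only [aperyVal]; omega

theorem aperyVal_eq_three_mul_f_add_n1 :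
    D.aperyVal (D.α2 - 2, D.α3 - 2, D.α4 - 1) = 3 * D.f + D.n1 := by
  have := D.f_add_n1; have := D.f_add_n2; have := D.f_add_n3
  have := sub_one_mul_eq_sub_two_mul_add D.n2 D.two_le_α2
  have := sub_one_mul_eq_sub_two_mul_add D.n3 D.two_le_α3
  simp only [aperyVal]; omega

theorem mem_aperyExps_top_or_succ {b c d : ℕ} (hv : (b, c, d) ∈ D.aperyExps) :
    (b, c, d) = (D.α2 - 1, 0, 0) ∨ (b, c, d) = (D.α2 - 2, D.α3 - 1, 0) ∨
      (b, c, d) = (D.α2 - 2, D.α3 - 2, D.α4 - 1) ∨ (b + 1, c, d) ∈ D.aperyExps ∨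
      (b, c + 1, d) ∈ D.aperyExps ∨ (b, c, d + 1) ∈ D.aperyExps := by
  simp only [mem_aperyExps, Prod.mk.injEq] at hv ⊢
  rcases hv with ⟨hb, hc, hd⟩ | ⟨hb, rfl, rfl⟩ | h
  · rcases Nat.lt_or_ge (d + 1) D.α4 with hd' | hd'
    · exact .inr <| .inr <| .inr <| .inr <| .inr <| .inl ⟨hb, hc, hd'⟩
    rcases Nat.lt_or_ge (c + 1) (D.α3 - 1) with hc' | hc'
    · exact .inr <| .inr <| .inr <| .inr <| .inl <| .inl ⟨hb, hc', hd⟩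
    rcases Nat.lt_or_ge (b + 1) (D.α2 - 1) with hb' | hb'
    · exact .inr <| .inr <| .inr <| .inl <| .inl ⟨hb', hc, hd⟩
    · exact .inr <| .inr <| .inl ⟨by omega, by omega, by omega⟩
  · rcases Nat.lt_or_ge (b + 1) (D.α2 - 1) with hb' | hb'
    · exact .inr <| .inr <| .inr <| .inl <| .inr <| .inl ⟨hb', rfl, rfl⟩
    · exact .inr <| .inl ⟨by omega, rfl, rfl⟩
  · exact .inl h

theorem mul_f_add_mem (k : ℕ) : ∀ g ∈ D.gens, k * D.f + g ∈ D.semigroup := by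
  refine AddSubmonoid.mul_add_mem_closure (fun g hg => ?_) k
  have hmul : ∀ {a n : ℕ}, 2 ≤ a → n ∈ D.gens →
      ∃ g' ∈ D.gens, ∃ s ∈ D.semigroup, (a - 1) * n = g' + s :=
    fun ha hn => ⟨_, hn, _, nsmul_mem (D.mem_semigroup_of_mem_gens hn) _,
      by rw [sub_one_mul_eq_sub_two_mul_add _ ha, smul_eq_mul, add_comm]⟩
  simp only [gens, Set.mem_insert_iff, Set.mem_singleton_iff] at hg
  rcases hg with rfl | rfl | rfl | rfl
  · exact D.f_add_n1 ▸ hmul D.two_le_α2 (by simp [gens])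
  · exact D.f_add_n2 ▸ hmul D.two_le_α3 (by simp [gens])
  · exact D.f_add_n3 ▸ hmul D.two_le_α4 (by simp [gens])
  · exact D.f_add_n4 ▸ hmul D.two_le_α1 (by simp [gens])

theorem mul_f_not_mem {k : ℕ} (hk : k = 1 ∨ k = 2 ∨ k = 3) : k * D.f ∉ D.semigroup := by
  have := D.two_le_α2; have := D.two_le_α3; have := D.two_le_α4
  rcases hk with rfl | rfl | rfl
  · refine (D.aperyVal_mem_apery (v := (D.α2 - 1, 0, 0)) ?_).2 _ ?_
    · simp [mem_aperyExps]
    · rw [aperyVal_eq_f_add_n1, one_mul]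
  · refine (D.aperyVal_mem_apery (v := (D.α2 - 2, D.α3 - 1, 0)) ?_).2 _
      D.aperyVal_eq_two_mul_f_add_n1.symm
    simp only [mem_aperyExps, and_true]; omega
  · refine (D.aperyVal_mem_apery (v := (D.α2 - 2, D.α3 - 2, D.α4 - 1)) ?_).2 _
      D.aperyVal_eq_three_mul_f_add_n1.symm
    simp only [mem_aperyExps]; omega

theorem eq_of_mem_PF {S : NumericalSemigroup} (hS : S.carrier = D.semigroup) {x : ℕ}
    (hx : x ∈ S.PF) : x = D.f ∨ x = 2 * D.f ∨ x = 3 * D.f := by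
  obtain ⟨hxS, hadd⟩ := hx
  rw [hS] at hxS hadd
  obtain ⟨⟨b, c, d⟩, hv, hmod⟩ := D.exists_aperyVal_modEq x
  have hw := D.aperyVal_mem_apery hv
  have hlt : x < D.aperyVal (b, c, d) :=
    not_le.mp fun h => hxS ((AddSubmonoid.mem_iff_le_of_modEq D.n1_mem hw hmod).mpr h)
  have hle : D.aperyVal (b, c, d) ≤ x + D.n1 :=
    (AddSubmonoid.mem_iff_le_of_modEq D.n1_mem hw (Nat.add_modEq_right.trans hmod)).mp
      (hadd _ D.n1_mem D.n1_pos.ne')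
  have heq : D.aperyVal (b, c, d) = x + D.n1 := by
    have := Nat.le_of_dvd (by omega) ((Nat.modEq_iff_dvd' hlt.le).mp hmod)
    omega
  have hsucc : ∀ v' ∈ D.aperyExps, ∀ g ∈ D.gens, D.aperyVal v' ≠ D.aperyVal (b, c, d) + g := by
    intro v' hv' g hg h
    exact (D.aperyVal_mem_apery hv').2 (x + g) (by omega)
      (hadd g (D.mem_semigroup_of_mem_gens hg) (D.pos_of_mem_gens hg).ne')
  rcases D.mem_aperyExps_top_or_succ hv with h | h | h | h | h | h
  · rw [h, aperyVal_eq_f_add_n1] at heq; omega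
  · rw [h, aperyVal_eq_two_mul_f_add_n1] at heq; omega
  · rw [h, aperyVal_eq_three_mul_f_add_n1] at heq; omega
  · exact absurd (by simp only [aperyVal]; ring) (hsucc _ h D.n2 (by simp [gens]))
  · exact absurd (by simp only [aperyVal]; ring) (hsucc _ h D.n3 (by simp [gens]))
  · exact absurd (by simp only [aperyVal]; ring) (hsucc _ h D.n4 (by simp [gens]))

theorem PF_eq {S : NumericalSemigroup} (hS : S.carrier = D.semigroup) :
    S.PF = {D.f, 2 * D.f, 3 * D.f} := by
  ext x
  refine ⟨fun hx => by simpa using D.eq_of_mem_PF hS hx, fun hx => ?_⟩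
  obtain ⟨k, hk, rfl⟩ : ∃ k, (k = 1 ∨ k = 2 ∨ k = 3) ∧ x = k * D.f := by
    simp only [Set.mem_insert_iff, Set.mem_singleton_iff] at hx
    rcases hx with rfl | rfl | rfl <;> simp
  exact NumericalSemigroup.mem_PF_of_forall_add_mem hS (hS ▸ D.mul_f_not_mem hk)
    (fun g hg => hS ▸ D.mul_f_add_mem k g hg)

theorem frob_eq {S : NumericalSemigroup} (hS : S.carrier = D.semigroup) : S.frob = 3 * D.f := by
  have h3 : 3 * D.f ∉ S.carrier := hS ▸ D.mul_f_not_mem (by simp)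
  have hmem := S.frob_mem_PF h3
  have hle := S.le_frob h3
  rw [D.PF_eq hS] at hmem
  simp only [Set.mem_insert_iff, Set.mem_singleton_iff] at hmem
  omega

theorem eq_f_of_intCast {g : ℕ} (hg : (g : ℤ) = ((D.α2 : ℤ) - 1) * D.n2 - D.n1) : g = D.f := by
  have h := congrArg (Nat.cast : ℕ → ℤ) D.f_add_n1
  push_cast [Nat.cast_sub (by have := D.two_le_α2; omega : 1 ≤ D.α2)] at h
  omega

theorem two_mul_f_intCast :
    2 * (D.f : ℤ) = ((D.α2 : ℤ) - 2) * D.n2 + ((D.α3 : ℤ) - 1) * D.n3 - D.n1 := by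
  have h := congrArg (Nat.cast : ℕ → ℤ) D.aperyVal_eq_two_mul_f_add_n1
  push_cast [aperyVal, Nat.cast_sub D.two_le_α2,
    Nat.cast_sub (by have := D.two_le_α3; omega : 1 ≤ D.α3)] at h
  omega

end Alphas

theorem PF_of_constructed_almostSymmetric_type_three_general
    (α1 α2 α3 α4 : ℕ)
    (hg1 : 1 < α1) (hg2 : 1 < α2) (hg3 : 1 < α3) (hg4 : 1 < α4)
    (n1 n2 n3 n4 : ℕ)
    (hn1 : n1 = (α2 - 1) * (α3 - 1) * α4 + α2)
    (hn2 : n2 = (α3 - 1) * (α4 - 1) * α1 + α3)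
    (hn3 : n3 = (α4 - 1) * (α1 - 1) * α2 + α4)
    (hn4 : n4 = (α1 - 1) * (α2 - 1) * α3 + α1)
    (hgcd : Nat.gcd (Nat.gcd (Nat.gcd n1 n2) n3) n4 = 1)
    (S : NumericalSemigroup)
    (hS : S.carrier = (AddSubmonoid.closure ({n1, n2, n3, n4} : Set ℕ) : Set ℕ))
    (f : ℕ) (hf : (f : ℤ) = ((α2 : ℤ) - 1) * n2 - n1) :
    S.PF = {f, 2 * f, 3 * f} ∧ S.frob = 3 * f ∧
      2 * (f : ℤ) = ((α2 : ℤ) - 2) * n2 + ((α3 : ℤ) - 1) * n3 - n1 := by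
  subst hn1 hn2 hn3 hn4
  let D : Alphas := ⟨α1, α2, α3, α4, hg1, hg2, hg3, hg4, hgcd⟩
  obtain rfl : f = D.f := D.eq_f_of_intCast hf
  exact ⟨D.PF_eq hS, D.frob_eq hS, D.two_mul_f_intCast⟩

/-- With the construction of Theorem `construction`, setting `f = (α₂−1)n₂ − n₁`, the
pseudo-Frobenius numbers of the resulting semigroup are `{f, 2f, 3f}`; in particular
`F(S) = 3f` and `2f = (α₂−2)n₂ + (α₃−1)n₃ − n₁`. -/
theorem PF_of_constructed_almostSymmetric_type_three
    (α1 α2 α3 α4 : ℕ)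
    (ho1 : Odd α1) (ho2 : Odd α2) (ho3 : Odd α3) (ho4 : Odd α4)
    (hg1 : 1 < α1) (hg2 : 1 < α2) (hg3 : 1 < α3) (hg4 : 1 < α4)
    (n1 n2 n3 n4 : ℕ)
    (hn1 : n1 = (α2 - 1) * (α3 - 1) * α4 + α2)
    (hn2 : n2 = (α3 - 1) * (α4 - 1) * α1 + α3)
    (hn3 : n3 = (α4 - 1) * (α1 - 1) * α2 + α4)
    (hn4 : n4 = (α1 - 1) * (α2 - 1) * α3 + α1)
    (hgcd : Nat.gcd (Nat.gcd (Nat.gcd n1 n2) n3) n4 = 1)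
    (S : NumericalSemigroup)
    (hS : S.carrier = (AddSubmonoid.closure ({n1, n2, n3, n4} : Set ℕ) : Set ℕ))
    (f : ℕ) (hf : (f : ℤ) = ((α2 : ℤ) - 1) * n2 - n1) :
    S.PF = {f, 2 * f, 3 * f} ∧ S.frob = 3 * f ∧
      2 * (f : ℤ) = ((α2 : ℤ) - 2) * n2 + ((α3 : ℤ) - 1) * n3 - n1 :=
  PF_of_constructed_almostSymmetric_type_three_general α1 α2 α3 α4 hg1 hg2 hg3 hg4 n1 n2 n3 n4 hn1
    hn2 hn3 hn4 hgcd S hS f hf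
end

section
/- For every positive integer n, the submonoid S_n of ℕ generated by 15, 15 + 2^{n+2}, 15 + 2^{n+2} + 2^{n+1}, and 15 + 2^{n+2} + 2^{n+1} + 2^n is an almost symmetric numerical semigroup of type three, minimally generated by these four odd integers, and PF(S_n) = {15 + 2^{n+3}, 2·(15 + 2^{n+3}), 3·(15 + 2^{n+3})}. -/
namespace AddSubmonoid

variable {M : Type*}

theorem mem_closure_insert [AddCommMonoid M] {a x : M} {s : Set M} :
    x ∈ closure (insert a s) ↔ ∃ k : ℕ, ∃ y ∈ closure s, k • a + y = x := by
  rw [Set.insert_eq, closure_union, mem_sup]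
  simp_rw [mem_closure_singleton, exists_exists_eq_and]

theorem mem_closure_triple [AddCommMonoid M] {a b c x : M} :
    x ∈ closure {a, b, c} ↔ ∃ i j k : ℕ, i • a + j • b + k • c = x := by
  rw [mem_closure_insert]
  simp only [mem_closure_pair]
  constructor
  · rintro ⟨i, _, ⟨j, k, rfl⟩, rfl⟩
    exact ⟨i, j, k, add_assoc _ _ _⟩
  · rintro ⟨i, j, k, rfl⟩
    exact ⟨i, _, ⟨j, k, rfl⟩, (add_assoc _ _ _).symm⟩

theorem add_mem_closure_of_forall_add_mem [AddMonoid M] {s : Set M} {f x : M}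
    (hf : ∀ a ∈ s, f + a ∈ closure s) (hx : x ∈ closure s) (hx0 : x ≠ 0) :
    f + x ∈ closure s := by
  have zero_or : x = 0 ∨ f + x ∈ closure s := by
    clear hx0
    induction hx using closure_induction with
    | mem a ha => exact .inr (hf a ha)
    | zero => exact .inl rfl
    | add y z _ hz ihy ihz =>
      rcases ihy with rfl | hfy
      · simpa using ihz
      · exact .inr (by rw [← add_assoc]; exact add_mem hfy hz)
  exact zero_or.resolve_left hx0

theorem closure_ne_closure_of_ssubset [AddMonoid M] {s t : Set M}
    (hs : ∀ a ∈ s, a ∉ closure (s \ {a})) (hts : t ⊂ s) : closure s ≠ closure t := by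
  intro h
  obtain ⟨a, has, hat⟩ := Set.exists_of_ssubset hts
  refine hs a has (closure_mono ?_ (h ▸ subset_closure has))
  exact fun b hbt => ⟨hts.subset hbt, fun hba => hat (hba ▸ hbt)⟩

end AddSubmonoid

namespace NumericalSemigroup

theorem mem_PF_iff_of_carrier_eq_closure {S : NumericalSemigroup} {A : Set ℕ}
    (hS : S.carrier = AddSubmonoid.closure A) (hA : 0 ∉ A) {f : ℕ} :
    f ∈ S.PF ↔ f ∉ S.carrier ∧ ∀ a ∈ A, f + a ∈ S.carrier := by
  simp only [PF, Set.mem_ofPred_eq, hS, SetLike.mem_coe]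
  refine and_congr_right fun _ => ⟨fun h a ha => ?_, fun h s hs hs0 => ?_⟩
  · exact h a (AddSubmonoid.subset_closure ha) (ne_of_mem_of_not_mem ha hA)
  · exact AddSubmonoid.add_mem_closure_of_forall_add_mem h hs hs0

end NumericalSemigroup

namespace FifteenFamily

open AddSubmonoid Finset NumericalSemigroup

def submonoid (q : ℕ) : AddSubmonoid ℕ :=
  AddSubmonoid.closure {15, 15 + 4 * q, 15 + 6 * q, 15 + 7 * q}

theorem mem_submonoid_iff {q x : ℕ} :
    x ∈ submonoid q ↔ ∃ k b c d, x = 15 * (k + b + c + d) + q * (4 * b + 6 * c + 7 * d) := by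
  rw [submonoid, mem_closure_insert]
  simp only [mem_closure_triple, smul_eq_mul]
  constructor
  · rintro ⟨k, _, ⟨b, c, d, rfl⟩, rfl⟩
    exact ⟨k, b, c, d, by ring⟩
  · rintro ⟨k, b, c, d, rfl⟩
    exact ⟨k, _, ⟨b, c, d, rfl⟩, by ring⟩

/-- The least element of the numerical semigroup `⟨4, 6, 7⟩` in each residue class mod `15`. -/
def classMinima : Finset ℕ := {0, 4, 6, 7, 8, 10, 11, 12, 13, 14, 16, 17, 18, 20, 24}

theorem classMinima_le {m : ℕ} (hm : m ∈ classMinima) : m ≤ 24 := by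
  revert m; decide

theorem eq_of_mem_classMinima_of_modEq {m m' : ℕ} (hm : m ∈ classMinima)
    (hm' : m' ∈ classMinima) (h : m ≡ m' [MOD 15]) : m = m' :=
  (by decide : ∀ m ∈ classMinima, ∀ m' ∈ classMinima, m % 15 = m' % 15 → m = m') m hm m' hm' h

theorem exists_mem_classMinima_modEq (r : ℕ) : ∃ m ∈ classMinima, m ≡ r [MOD 15] :=
  (by decide : ∀ r < 15, ∃ m ∈ classMinima, m % 15 = r) (r % 15) (Nat.mod_lt r (by norm_num))

theorem exists_sum_eq_of_mem_classMinima {m : ℕ} (hm : m ∈ classMinima) :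
    ∃ b c d, 4 * b + 6 * c + 7 * d = m ∧ b + c + d = (m + 6) / 7 := by
  have bounded : ∀ m ∈ classMinima, ∃ b < 7, ∃ c < 5, ∃ d < 4,
      4 * b + 6 * c + 7 * d = m ∧ b + c + d = (m + 6) / 7 := by decide
  obtain ⟨b, -, c, -, d, -, h⟩ := bounded m hm
  exact ⟨b, c, d, h⟩

theorem exists_mem_classMinima_le_modEq (b c d : ℕ) :
    ∃ m ∈ classMinima, m ≤ 4 * b + 6 * c + 7 * d ∧ m ≡ 4 * b + 6 * c + 7 * d [MOD 15] := by
  obtain ⟨m, hm, hmod⟩ := exists_mem_classMinima_modEq (4 * b + 6 * c + 7 * d)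
  refine ⟨m, hm, ?_, hmod⟩
  -- `1, 2, 3, 5, 9` are the gaps of `⟨4, 6, 7⟩`
  have small : ∀ v < 25, v ∉ ({1, 2, 3, 5, 9} : Finset ℕ) →
      ∀ m ∈ classMinima, m % 15 = v % 15 → m ≤ v := by decide
  by_cases hv : 4 * b + 6 * c + 7 * d < 25
  · exact small _ hv (by simp only [mem_insert, mem_singleton]; omega) m hm hmod
  · have := classMinima_le hm
    omega

/-- `(m + 6) / 7 = ⌈m / 7⌉` is the least number of terms from `{4, 6, 7}` adding up to
`m ∈ classMinima`, so that `apery q m` is the least element `15 N + q v` of `submonoid q` with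
`v ≡ m [MOD 15]`. -/
def apery (q m : ℕ) : ℕ := 15 * ((m + 6) / 7) + q * m

theorem apery_modEq (q m : ℕ) : apery q m ≡ q * m [MOD 15] := by
  unfold apery Nat.ModEq; omega

theorem apery_le {q m : ℕ} (hm : m ∈ classMinima) : apery q m ≤ 60 + 24 * q := by
  have h24 := classMinima_le hm
  have : q * m ≤ q * 24 := Nat.mul_le_mul_left q h24
  unfold apery; omega

theorem mem_of_apery_le {q m x : ℕ} (hm : m ∈ classMinima) (hmod : apery q m ≡ x [MOD 15])
    (hle : apery q m ≤ x) : x ∈ submonoid q := by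
  obtain ⟨b, c, d, hv, hn⟩ := exists_sum_eq_of_mem_classMinima hm
  refine mem_submonoid_iff.2 ⟨(x - apery q m) / 15, b, c, d, ?_⟩
  have e : 15 * ((x - apery q m) / 15 + b + c + d) + q * (4 * b + 6 * c + 7 * d)
      = 15 * ((x - apery q m) / 15) + apery q m := by
    rw [hv, add_assoc _ b, add_assoc _ (b + c), hn, apery]; ring
  rw [e]
  unfold Nat.ModEq at hmod
  omega

theorem exists_apery_le_of_mem {q x : ℕ} (hx : x ∈ submonoid q) :
    ∃ m ∈ classMinima, apery q m ≡ x [MOD 15] ∧ apery q m ≤ x := by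
  obtain ⟨k, b, c, d, rfl⟩ := mem_submonoid_iff.1 hx
  obtain ⟨m, hm, hle, hmod⟩ := exists_mem_classMinima_le_modEq b c d
  obtain ⟨i, hi⟩ : ∃ i, 4 * b + 6 * c + 7 * d = m + 15 * i :=
    ⟨(4 * b + 6 * c + 7 * d - m) / 15, by unfold Nat.ModEq at hmod; omega⟩
  have e : 15 * (k + b + c + d) + q * (4 * b + 6 * c + 7 * d)
      = 15 * (k + b + c + d + q * i) + q * m := by rw [hi]; ring
  refine ⟨m, hm, ?_, ?_⟩ <;> rw [e] <;> unfold apery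
  · unfold Nat.ModEq; omega
  · omega

theorem apery_add_mem {q m m' e : ℕ} (hm' : m' ∈ classMinima) (hmod : m' ≡ m + e [MOD 15])
    (hle : m' ≤ m + e) (hceil : (m' + 6) / 7 ≤ (m + 6) / 7) :
    apery q m + e * q ∈ submonoid q := by
  rw [mul_comm e q]
  refine mem_of_apery_le hm' ?_ ?_
  · have := hmod.mul_left q
    unfold apery Nat.ModEq at *
    rw [mul_add] at this
    omega
  · have := Nat.mul_le_mul_left q hle
    unfold apery
    rw [mul_add] at this
    omega

def gaps (q : ℕ) : Finset ℕ :=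
  classMinima.biUnion fun m => (range (apery q m / 15)).image fun i => apery q m % 15 + 15 * i

section Coprime

variable {q : ℕ} (hq : q.Coprime 15)
include hq

theorem eq_of_apery_modEq {m m' : ℕ} (hm : m ∈ classMinima) (hm' : m' ∈ classMinima)
    (h : apery q m ≡ apery q m' [MOD 15]) : m = m' :=
  eq_of_mem_classMinima_of_modEq hm hm' <| Nat.ModEq.cancel_left_of_coprime hq.symm <|
    (apery_modEq q m).symm.trans (h.trans (apery_modEq q m'))

theorem exists_apery_modEq (x : ℕ) : ∃ m ∈ classMinima, apery q m ≡ x [MOD 15] := by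
  obtain ⟨y, -, hy⟩ := Nat.exists_mul_mod_eq_of_coprime x hq (by norm_num)
  obtain ⟨m, hm, hmy⟩ := exists_mem_classMinima_modEq y
  exact ⟨m, hm, (apery_modEq q m).trans ((hmy.mul_left q).trans hy)⟩

theorem mem_iff_apery_le {m x : ℕ} (hm : m ∈ classMinima) (hmod : apery q m ≡ x [MOD 15]) :
    x ∈ submonoid q ↔ apery q m ≤ x := by
  refine ⟨fun hx => ?_, mem_of_apery_le hm hmod⟩
  obtain ⟨m', hm', hmod', hle⟩ := exists_apery_le_of_mem hx
  rwa [eq_of_apery_modEq hq hm hm' (hmod.trans hmod'.symm)]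

theorem apery_add_notMem {m e : ℕ} (hme : m + e ∈ classMinima)
    (hceil : (m + 6) / 7 < (m + e + 6) / 7) : apery q m + e * q ∉ submonoid q := by
  rw [mul_comm e q, mem_iff_apery_le hq hme (by unfold apery Nat.ModEq; rw [mul_add]; omega)]
  unfold apery
  rw [mul_add]
  omega

theorem eq_apery_of_notMem_of_add_mem {f : ℕ} (hf : f ∉ submonoid q)
    (hf15 : f + 15 ∈ submonoid q) : ∃ m ∈ classMinima, f + 15 = apery q m := by
  obtain ⟨m, hm, hmod⟩ := exists_apery_modEq hq f
  have hmod15 : apery q m ≡ f + 15 [MOD 15] := by unfold Nat.ModEq at *; omega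
  have hlt := (mem_iff_apery_le hq hm hmod).not.1 hf
  have hle := (mem_iff_apery_le hq hm hmod15).1 hf15
  unfold Nat.ModEq at hmod
  exact ⟨m, hm, by omega⟩

theorem pseudoFrobenius_iff {f : ℕ} :
    (f ∉ submonoid q ∧ ∀ e ∈ ({0, 4, 6, 7} : Finset ℕ), f + (15 + e * q) ∈ submonoid q) ↔
      ∃ m ∈ ({8, 16, 24} : Finset ℕ), f + 15 = apery q m := by
  constructor
  · rintro ⟨hf, hgen⟩
    obtain ⟨m, hm, hfm⟩ :=
      eq_apery_of_notMem_of_add_mem hq hf (by simpa using hgen 0 (by simp))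
    have nonmaximal : ∀ m ∈ classMinima, m ∉ ({0, 8, 16, 24} : Finset ℕ) →
        ∃ e ∈ ({4, 6, 7} : Finset ℕ), m + e ∈ classMinima ∧ (m + 6) / 7 < (m + e + 6) / 7 := by
      decide
    refine ⟨m, ?_, hfm⟩
    by_contra hm'
    have hm0 : m ≠ 0 := by rintro rfl; simp [apery] at hfm
    obtain ⟨e, he, hme, hceil⟩ := nonmaximal m hm (by simp_all)
    refine apery_add_notMem hq hme hceil ?_
    rw [← hfm, add_assoc]
    exact hgen e (by simp_all)
  · rintro ⟨m, hm, hfm⟩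
    have maximal : ∀ m ∈ ({8, 16, 24} : Finset ℕ), ∀ e ∈ ({0, 4, 6, 7} : Finset ℕ),
        ∃ m' ∈ classMinima, m' % 15 = (m + e) % 15 ∧ m' ≤ m + e ∧
          (m' + 6) / 7 ≤ (m + 6) / 7 := by
      decide
    have hmL : m ∈ classMinima := (by decide : ({8, 16, 24} : Finset ℕ) ⊆ classMinima) hm
    refine ⟨fun hf => ?_, fun e he => ?_⟩
    · have := (mem_iff_apery_le hq hmL (by unfold Nat.ModEq; omega)).1 hf
      omega
    · obtain ⟨m', hm', hmod, hle, hceil⟩ := maximal m hm e he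
      rw [← add_assoc, hfm]
      exact apery_add_mem hm' hmod hle hceil

theorem mem_gaps {x : ℕ} : x ∈ gaps q ↔ x ∉ submonoid q := by
  simp only [gaps, mem_biUnion, mem_image, mem_range]
  obtain ⟨m, hm, hmod⟩ := exists_apery_modEq hq x
  rw [mem_iff_apery_le hq hm hmod, not_le]
  constructor
  · rintro ⟨m', hm', i, hi, rfl⟩
    have hmm' : m' = m := eq_of_apery_modEq hq hm' hm <| by
      unfold Nat.ModEq at hmod ⊢; omega
    subst hmm'
    omega
  · intro hlt
    unfold Nat.ModEq at hmod
    exact ⟨m, hm, x / 15, by omega, by omega⟩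

theorem sum_apery_mod : ∑ m ∈ classMinima, apery q m % 15 = 105 := by
  have hinj : Set.InjOn (fun m => apery q m % 15) classMinima :=
    fun m hm m' hm' h => eq_of_apery_modEq hq (mem_coe.1 hm) (mem_coe.1 hm') h
  have himage : classMinima.image (fun m => apery q m % 15) = range 15 := by
    refine eq_of_subset_of_card_le (fun r hr => ?_) ?_
    · obtain ⟨m, -, rfl⟩ := mem_image.1 hr
      exact mem_range.2 (Nat.mod_lt _ (by norm_num))
    · rw [card_image_of_injOn hinj]; decide
  calc ∑ m ∈ classMinima, apery q m % 15
      = ∑ r ∈ classMinima.image fun m => apery q m % 15, r :=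
        (sum_image (f := fun r => r) hinj).symm
    _ = 105 := by rw [himage]; decide

theorem card_gaps : (gaps q).card = 24 + 12 * q := by
  rw [gaps, card_biUnion]
  · have hcard : ∀ m ∈ classMinima,
        ((range (apery q m / 15)).image fun i => apery q m % 15 + 15 * i).card = apery q m / 15 :=
      fun m _ => by rw [card_image_of_injective _ (fun i j h => by omega), card_range]
    have hdiv : ∑ m ∈ classMinima, (15 * (apery q m / 15) + apery q m % 15)
        = ∑ m ∈ classMinima, apery q m := sum_congr rfl fun m _ => Nat.div_add_mod _ _
    have hsum : ∑ m ∈ classMinima, apery q m = 465 + 180 * q := by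
      have hceil : ∑ m ∈ classMinima, (m + 6) / 7 = 31 := by decide
      have hid : ∑ m ∈ classMinima, m = 180 := by decide
      simp only [apery]
      rw [sum_add_distrib, ← mul_sum, ← mul_sum, hceil, hid]
      ring
    rw [sum_congr rfl hcard]
    rw [sum_add_distrib, ← mul_sum, sum_apery_mod hq, hsum] at hdiv
    omega
  · intro m hm m' hm' hne
    simp only [Function.onFun, disjoint_left, mem_image, mem_range]
    rintro _ ⟨i, -, rfl⟩ ⟨j, -, h⟩
    exact hne (eq_of_apery_modEq hq hm hm' (by unfold Nat.ModEq; omega))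

theorem isGreatest_compl : IsGreatest (submonoid q : Set ℕ)ᶜ (45 + 24 * q) := by
  refine ⟨?_, fun x hx => ?_⟩
  · rw [Set.mem_compl_iff, SetLike.mem_coe,
      mem_iff_apery_le hq (m := 24) (by decide) (by unfold apery Nat.ModEq; omega)]
    unfold apery; omega
  · obtain ⟨m, hm, hmod⟩ := exists_apery_modEq hq x
    have hlt := (mem_iff_apery_le hq hm hmod).not.1 hx
    have := apery_le (q := q) hm
    unfold Nat.ModEq at hmod
    omega

end Coprime

section Minimal

variable {q : ℕ} (h5 : ¬ 5 ∣ q)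
include h5

theorem fifteen_notMem_closure :
    15 ∉ AddSubmonoid.closure ({15 + 4 * q, 15 + 6 * q, 15 + 7 * q} : Set ℕ) := by
  simp only [mem_closure_triple, smul_eq_mul, not_exists]
  intro a b c h
  have ha : a < 1 := Nat.lt_of_mul_lt_mul_right (a := 15 + 4 * q) (by omega)
  have hb : b < 1 := Nat.lt_of_mul_lt_mul_right (a := 15 + 6 * q) (by omega)
  have hc : c < 1 := Nat.lt_of_mul_lt_mul_right (a := 15 + 7 * q) (by omega)
  interval_cases a; interval_cases b; interval_cases c; omega

theorem fifteen_add_four_mul_notMem_closure :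
    15 + 4 * q ∉ AddSubmonoid.closure ({15, 15 + 6 * q, 15 + 7 * q} : Set ℕ) := by
  simp only [mem_closure_triple, smul_eq_mul, not_exists]
  intro a b c h
  have hb : b < 1 := Nat.lt_of_mul_lt_mul_right (a := 15 + 6 * q) (by omega)
  have hc : c < 1 := Nat.lt_of_mul_lt_mul_right (a := 15 + 7 * q) (by omega)
  interval_cases b; interval_cases c; omega

theorem fifteen_add_six_mul_notMem_closure :
    15 + 6 * q ∉ AddSubmonoid.closure ({15, 15 + 4 * q, 15 + 7 * q} : Set ℕ) := by
  simp only [mem_closure_triple, smul_eq_mul, not_exists]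
  intro a b c h
  have hb : b < 2 := Nat.lt_of_mul_lt_mul_right (a := 15 + 4 * q) (by omega)
  have hc : c < 1 := Nat.lt_of_mul_lt_mul_right (a := 15 + 7 * q) (by omega)
  interval_cases b <;> interval_cases c <;> omega

theorem fifteen_add_seven_mul_notMem_closure :
    15 + 7 * q ∉ AddSubmonoid.closure ({15, 15 + 4 * q, 15 + 6 * q} : Set ℕ) := by
  simp only [mem_closure_triple, smul_eq_mul, not_exists]
  intro a b c h
  have hb : b < 2 := Nat.lt_of_mul_lt_mul_right (a := 15 + 4 * q) (by omega)
  have hc : c < 2 := Nat.lt_of_mul_lt_mul_right (a := 15 + 6 * q) (by omega)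
  interval_cases b <;> interval_cases c <;> omega

theorem notMem_closure_sdiff :
    ∀ g ∈ ({15, 15 + 4 * q, 15 + 6 * q, 15 + 7 * q} : Set ℕ),
      g ∉ AddSubmonoid.closure (({15, 15 + 4 * q, 15 + 6 * q, 15 + 7 * q} : Set ℕ) \ {g}) := by
  have restrict {g : ℕ} {t : Set ℕ}
      (h : ∀ x, x = 15 ∨ x = 15 + 4 * q ∨ x = 15 + 6 * q ∨ x = 15 + 7 * q → x = g ∨ x ∈ t) :
      AddSubmonoid.closure (({15, 15 + 4 * q, 15 + 6 * q, 15 + 7 * q} : Set ℕ) \ {g}) ≤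
        AddSubmonoid.closure t :=
    closure_mono (Set.sdiff_singleton_subset_iff.2 h)
  rintro g (rfl | rfl | rfl | rfl) hg
  · exact fifteen_notMem_closure h5 (restrict (by simp) hg)
  · exact fifteen_add_four_mul_notMem_closure h5 (restrict (by simp) hg)
  · exact fifteen_add_six_mul_notMem_closure h5 (restrict (by simp) hg)
  · exact fifteen_add_seven_mul_notMem_closure h5 (restrict (by simp) hg)

end Minimal

variable {q : ℕ}

theorem not_five_dvd (hq : q.Coprime 15) : ¬ 5 ∣ q := fun h =>
  absurd ((hq.coprime_dvd_right (by norm_num : 5 ∣ 15)).symm.eq_one_of_dvd h) (by norm_num)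

theorem coe_gaps (hq : q.Coprime 15) : (gaps q : Set ℕ) = (submonoid q : Set ℕ)ᶜ :=
  Set.ext fun _ => mem_gaps hq

def numericalSemigroup (hq : q.Coprime 15) : NumericalSemigroup where
  carrier := submonoid q
  zero_mem := (submonoid q).zero_mem
  add_mem := (submonoid q).add_mem
  cofinite := coe_gaps hq ▸ (gaps q).finite_toSet

variable (hq : q.Coprime 15)

theorem genus_numericalSemigroup : (numericalSemigroup hq).genus = 24 + 12 * q := by
  rw [genus, numericalSemigroup, ← coe_gaps hq, Set.ncard_coe_finset, card_gaps hq]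

theorem frob_numericalSemigroup : (numericalSemigroup hq).frob = 45 + 24 * q :=
  (isGreatest_compl hq).csSup_eq

theorem PF_numericalSemigroup :
    (numericalSemigroup hq).PF = {15 + 8 * q, 2 * (15 + 8 * q), 3 * (15 + 8 * q)} := by
  ext f
  rw [mem_PF_iff_of_carrier_eq_closure (A := {15, 15 + 4 * q, 15 + 6 * q, 15 + 7 * q}) rfl
    (by simp only [Set.mem_insert_iff, Set.mem_singleton_iff]; omega)]
  have := pseudoFrobenius_iff hq (f := f)
  simp only [numericalSemigroup, Set.mem_insert_iff, Set.mem_singleton_iff, forall_eq_or_imp,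
    forall_eq, Finset.mem_insert, Finset.mem_singleton, exists_eq_or_imp, exists_eq_left, apery,
    zero_mul, add_zero, SetLike.mem_coe] at this ⊢
  rw [this]
  omega

theorem typ_numericalSemigroup : (numericalSemigroup hq).typ = 3 := by
  rw [typ, PF_numericalSemigroup hq, Set.ncard_insert_of_notMem (by simp),
    Set.ncard_pair (by omega)]

theorem almostSymmetric_numericalSemigroup : (numericalSemigroup hq).AlmostSymmetric := by
  rw [AlmostSymmetric, genus_numericalSemigroup, frob_numericalSemigroup,
    typ_numericalSemigroup]
  ring

theorem minGen4_numericalSemigroup :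
    (numericalSemigroup hq).MinGen4 15 (15 + 4 * q) (15 + 6 * q) (15 + 7 * q) := by
  refine ⟨?_, rfl, fun B hB h => ?_⟩
  · have := not_five_dvd hq
    simp only [List.pairwise_cons, List.forall_mem_cons, List.not_mem_nil, IsEmpty.forall_iff,
      implies_true, List.Pairwise.nil, and_true]
    omega
  · exact closure_ne_closure_of_ssubset (notMem_closure_sdiff (not_five_dvd hq)) hB
      (SetLike.coe_injective h)

end FifteenFamily

open FifteenFamily in
/-- For every positive integer `n`, the submonoid of `ℕ` generated by `15`,
`15 + 2^(n+2)`, `15 + 2^(n+2) + 2^(n+1)` and `15 + 2^(n+2) + 2^(n+1) + 2^n` is an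
almost symmetric numerical semigroup of type three, minimally generated by these four
odd integers, and its pseudo-Frobenius numbers are
`{15 + 2^(n+3), 2(15 + 2^(n+3)), 3(15 + 2^(n+3))}`. -/
theorem almostSymmetric_type_three_family (n : ℕ) (hn : 0 < n) :
    ∃ S : NumericalSemigroup,
      S.carrier = (AddSubmonoid.closure
        ({15, 15 + 2 ^ (n + 2), 15 + 2 ^ (n + 2) + 2 ^ (n + 1),
          15 + 2 ^ (n + 2) + 2 ^ (n + 1) + 2 ^ n} : Set ℕ) : Set ℕ) ∧
      S.MinGen4 15 (15 + 2 ^ (n + 2)) (15 + 2 ^ (n + 2) + 2 ^ (n + 1))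
        (15 + 2 ^ (n + 2) + 2 ^ (n + 1) + 2 ^ n) ∧
      Odd (15 : ℕ) ∧ Odd (15 + 2 ^ (n + 2)) ∧
      Odd (15 + 2 ^ (n + 2) + 2 ^ (n + 1)) ∧
      Odd (15 + 2 ^ (n + 2) + 2 ^ (n + 1) + 2 ^ n) ∧
      S.AlmostSymmetric ∧ S.typ = 3 ∧
      S.PF = {15 + 2 ^ (n + 3), 2 * (15 + 2 ^ (n + 3)), 3 * (15 + 2 ^ (n + 3))} := by
  have hq : (2 ^ n).Coprime 15 := Nat.Coprime.pow_left n (by norm_num)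
  have e4 : 15 + 2 ^ (n + 2) = 15 + 4 * 2 ^ n := by ring
  have e6 : 15 + 2 ^ (n + 2) + 2 ^ (n + 1) = 15 + 6 * 2 ^ n := by ring
  have e7 : 15 + 2 ^ (n + 2) + 2 ^ (n + 1) + 2 ^ n = 15 + 7 * 2 ^ n := by ring
  have e8 : 15 + 2 ^ (n + 3) = 15 + 8 * 2 ^ n := by ring
  have heven : Even (2 ^ n) := (Nat.even_pow' hn.ne').2 even_two
  have hodd (k : ℕ) : Odd (15 + k * 2 ^ n) := (by decide : Odd 15).add_even (heven.mul_left k)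
  rw [e7, e6, e4, e8]
  exact ⟨numericalSemigroup hq, rfl, minGen4_numericalSemigroup hq, by decide, hodd 4, hodd 6,
    hodd 7, almostSymmetric_numericalSemigroup hq, typ_numericalSemigroup hq,
    PF_numericalSemigroup hq⟩
end
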